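/- With the setup described in the context, for all y, y' ∈ (Kˣ)^k the following are equivalent: (i) there exists t ∈ G such that t_i·x(y)_i = x(y')_i in K for all i ∈ {1,…,r}; (ii) y^{L2} = y'^{L2}. (Paper: Lemma 3.8 '2rep': two v-normalized representatives define the same point of the torus T_Q if and only if their L2-powers agree.) -/

import Mathlib

/-- The `N×N` submatrix of an `r×N` matrix formed by its first `N` rows. -/
def firstRows {r N : ℕ} (hNr : N ≤ r) (A : Matrix (Fin r) (Fin N) ℤ) :
    Matrix (Fin N) (Fin N) ℤ :=
  Matrix.of fun i j => A ⟨(i : ℕ), by have := i.isLt; omega⟩ j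

/-- The `k×k` bottom-right block of an `N×N` matrix (rows and columns
`N-k+1, …, N`). -/
def lowerRight {N k : ℕ} (hkN : k ≤ N) (H : Matrix (Fin N) (Fin N) ℤ) :
    Matrix (Fin k) (Fin k) ℤ :=
  Matrix.of fun i j =>
    H ⟨N - k + (i : ℕ), by have := i.isLt; omega⟩
      ⟨N - k + (j : ℕ), by have := j.isLt; omega⟩

/-- The `v`-normalized tuple `x(y) ∈ K^r` attached to `y ∈ (Kˣ)^k`:
`x(y)_i = 0` for `i ≤ N-k`, `x(y)_i = y_{i-(N-k)}` for `N-k < i ≤ N`, and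
`x(y)_i = 1` for `i > N`. -/
def xvec {K : Type*} [Field K] {k N r : ℕ} (hkN : k ≤ N) (hNr : N ≤ r)
    (y : Fin k → Kˣ) : Fin r → K :=
  fun i =>
    if h1 : (i : ℕ) < N - k then 0
    else if h2 : (i : ℕ) < N then (y ⟨(i : ℕ) - (N - k), by omega⟩ : K)
    else 1

/-!
Since `x(y)_i = 1` for `i > N`, an element `t ∈ G` moving `x(y)` to `x(y')` is trivial beyond the
first `N` coordinates, equals `w = y' / y` on the coordinates `N - k + 1, …, N` and is arbitrary
on the others. So the question is whether `w` extends to a solution `u` of `u ^ A' = 1`, or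
equivalently of `u ^ H = 1` since `T` is unimodular. As `H` is lower triangular, its last `k`
columns only involve the last `k` coordinates and there read `w ^ L2 = 1`; the remaining
equations are solved by back substitution, taking in `Kˣ` roots whose orders are the (nonzero)
diagonal entries of `H`.
-/

open Finset Function

lemma Finset.prod_zpow_eq_zpow_sum {G α : Type*} [CommGroup G] (a : G) (s : Finset α)
    (f : α → ℤ) : ∏ i ∈ s, a ^ f i = a ^ ∑ i ∈ s, f i := by
  have h := map_prod (zpowersHom G a) (fun i => Multiplicative.ofAdd (f i)) s
  rw [← ofAdd_sum] at h
  exact h.symm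

section VecZPow

variable {G : Type*} [CommGroup G] {ι κ : Type*} [Fintype ι]

/-- The tuple `t ^ M` of the paper. -/
def vecZPow (t : ι → G) (M : Matrix ι κ ℤ) : κ → G :=
  fun j => ∏ i, t i ^ M i j

@[simp]
lemma vecZPow_one_left (M : Matrix ι κ ℤ) : vecZPow (1 : ι → G) M = 1 := by
  ext j
  simp [vecZPow]

lemma vecZPow_mul_left (t s : ι → G) (M : Matrix ι κ ℤ) :
    vecZPow (t * s) M = vecZPow t M * vecZPow s M := by
  ext j
  simp [vecZPow, mul_zpow, prod_mul_distrib]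

lemma vecZPow_div_left (t s : ι → G) (M : Matrix ι κ ℤ) :
    vecZPow (t / s) M = vecZPow t M / vecZPow s M := by
  ext j
  simp [vecZPow, div_zpow, prod_div_distrib]

lemma vecZPow_mulSingle [DecidableEq ι] (i₀ : ι) (c : G) (M : Matrix ι κ ℤ) (j : κ) :
    vecZPow (Pi.mulSingle i₀ c) M j = c ^ M i₀ j := by
  rw [vecZPow, prod_eq_single i₀ (fun i _ hi => by simp [Pi.mulSingle_eq_of_ne hi])
    (by simp)]
  simp

lemma vecZPow_vecZPow {μ : Type*} [Fintype κ] (t : ι → G) (M : Matrix ι κ ℤ)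
    (P : Matrix κ μ ℤ) : vecZPow (vecZPow t M) P = vecZPow t (M * P) := by
  ext j
  simp only [vecZPow, Matrix.mul_apply, ← prod_zpow_eq_zpow_sum, zpow_mul, ← prod_zpow]
  exact prod_comm

lemma vecZPow_mul_eq_one_iff [Fintype κ] [DecidableEq κ] (t : ι → G) (M : Matrix ι κ ℤ)
    {P : Matrix κ κ ℤ} (hP : IsUnit P.det) : vecZPow t (M * P) = 1 ↔ vecZPow t M = 1 := by
  refine ⟨fun h => ?_, fun h => by rw [← vecZPow_vecZPow, h, vecZPow_one_left]⟩
  rw [← Matrix.mul_nonsing_inv_cancel_right _ M hP, ← vecZPow_vecZPow, h, vecZPow_one_left]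

lemma vecZPow_comp_submatrix {ι' κ' : Type*} [Fintype ι'] (t : ι → G) (M : Matrix ι κ ℤ)
    {e : ι' → ι} (he : Injective e) (f : κ' → κ)
    (h : ∀ i ∉ Set.range e, ∀ j, t i ^ M i (f j) = 1) :
    vecZPow (t ∘ e) (M.submatrix e f) = vecZPow t M ∘ f := by
  ext j
  exact Fintype.prod_of_injective e he _ _ (fun i hi => h i hi j) fun _ => rfl

end VecZPow

lemma zpow_surjective_units_of_isAlgClosed (K : Type*) [Field K] [IsAlgClosed K] {e : ℤ}
    (he : e ≠ 0) : Surjective fun b : Kˣ => b ^ e := by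
  intro a
  obtain ⟨z, hz⟩ := IsAlgClosed.exists_pow_nat_eq (a : K) (Int.natAbs_pos.mpr he)
  have hz0 : z ≠ 0 := by
    rintro rfl
    exact a.ne_zero (by rw [← hz, zero_pow (Int.natAbs_ne_zero.mpr he)])
  have hb : Units.mk0 z hz0 ^ e.natAbs = a := Units.ext (by simpa using hz)
  rcases Int.natAbs_eq e with h | h
  · exact ⟨Units.mk0 z hz0, show _ ^ e = a by rw [h, zpow_natCast, hb]⟩
  · exact ⟨(Units.mk0 z hz0)⁻¹,
      show _ ^ e = a by rw [h, zpow_neg, inv_zpow, inv_inv, zpow_natCast, hb]⟩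

lemma Matrix.IsLowerTriangular.diag_ne_zero {R : Type*} [CommRing R] {n : Type*} [Fintype n]
    [DecidableEq n] [LinearOrder n] {M : Matrix n n R} (hM : M.IsLowerTriangular)
    (hdet : M.det ≠ 0) (i : n) : M i i ≠ 0 := fun h =>
  hdet (by rw [M.det_of_isLowerTriangular hM]; exact prod_eq_zero (mem_univ i) h)

section LowerTriangular

variable {G : Type*} [CommGroup G] {n : ℕ} {H : Matrix (Fin n) (Fin n) ℤ}

lemma exists_vecZPow_eq_one_of_isLowerTriangular
    (hroot : ∀ e : ℤ, e ≠ 0 → Surjective fun b : G => b ^ e)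
    (hH : H.IsLowerTriangular) (hdiag : ∀ i, H i i ≠ 0) (m : ℕ) (v : Fin n → G)
    (hv : ∀ j : Fin n, m ≤ j → vecZPow v H j = 1) :
    ∃ u : Fin n → G, (∀ i : Fin n, m ≤ i → u i = v i) ∧ vecZPow u H = 1 := by
  induction m generalizing v with
  | zero => exact ⟨v, fun _ _ => rfl, funext fun j => hv j (Nat.zero_le _)⟩
  | succ m ih =>
    by_cases hm : m < n
    swap
    · obtain ⟨u, hu, hu_sol⟩ := ih v fun j hj => absurd j.isLt (by omega)
      exact ⟨u, fun i hi => hu i (by omega), hu_sol⟩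
    set i₀ : Fin n := ⟨m, hm⟩
    -- Correct `v` at `i₀` by a root `c` so that column `i₀` is solved; since `H i₀ j = 0`
    -- for `j > i₀`, the later columns are unaffected.
    obtain ⟨c, hc : c ^ H i₀ i₀ = (vecZPow v H i₀)⁻¹⟩ := hroot _ (hdiag i₀) _
    have hv' : ∀ j : Fin n, m ≤ j → vecZPow (v * Pi.mulSingle i₀ c) H j = 1 := by
      intro j hj
      rw [vecZPow_mul_left, Pi.mul_apply, vecZPow_mulSingle]
      rcases hj.eq_or_lt with hj | hj
      · obtain rfl : i₀ = j := Fin.ext hj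
        rw [hc, mul_inv_cancel]
      · rw [hv j hj, hH (show i₀ < j from hj), zpow_zero, one_mul]
    obtain ⟨u, hu, hu_sol⟩ := ih _ hv'
    refine ⟨u, fun i hi => ?_, hu_sol⟩
    rw [hu i (by omega), Pi.mul_apply, Pi.mulSingle_eq_of_ne (Fin.ne_of_gt (show i₀ < i from hi)),
      mul_one]

end LowerTriangular

section LastBlock

variable {k n : ℕ}

/-- The positions `n - k + 1, …, n` of the last `k` coordinates (numbered from `1`). -/
def lastBlock (hkn : k ≤ n) (i : Fin k) : Fin n :=
  ⟨n - k + i, by omega⟩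

lemma lastBlock_injective (hkn : k ≤ n) : Injective (lastBlock hkn) :=
  fun i j h => Fin.ext (by simpa [lastBlock] using h)

lemma le_lastBlock (hkn : k ≤ n) (i : Fin k) : n - k ≤ lastBlock hkn i :=
  Nat.le_add_right _ _

lemma mem_range_lastBlock (hkn : k ≤ n) {i : Fin n} :
    i ∈ Set.range (lastBlock hkn) ↔ n - k ≤ i :=
  ⟨by rintro ⟨j, rfl⟩; exact le_lastBlock hkn j,
    fun hi => ⟨⟨i - (n - k), by omega⟩, Fin.ext (by simp [lastBlock]; omega)⟩⟩

lemma lowerRight_eq_submatrix (hkn : k ≤ n) (H : Matrix (Fin n) (Fin n) ℤ) :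
    lowerRight hkn H = H.submatrix (lastBlock hkn) (lastBlock hkn) :=
  rfl

variable {G : Type*} [CommGroup G] {H : Matrix (Fin n) (Fin n) ℤ}

lemma vecZPow_lowerRight (hkn : k ≤ n) (hH : H.IsLowerTriangular) (u : Fin n → G) :
    vecZPow (u ∘ lastBlock hkn) (lowerRight hkn H) = vecZPow u H ∘ lastBlock hkn := by
  rw [lowerRight_eq_submatrix]
  refine vecZPow_comp_submatrix u H (lastBlock_injective hkn) _ fun i hi j => ?_
  have hi : (i : ℕ) < n - k := not_le.mp ((mem_range_lastBlock hkn).not.mp hi)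
  have hij : i < lastBlock hkn j := Fin.lt_def.mpr (by have := le_lastBlock hkn j; omega)
  have hH0 : H i (lastBlock hkn j) = 0 := hH hij
  rw [hH0, zpow_zero]

lemma exists_vecZPow_eq_one_comp_lastBlock_iff (hkn : k ≤ n)
    (hroot : ∀ e : ℤ, e ≠ 0 → Surjective fun b : G => b ^ e)
    (hH : H.IsLowerTriangular) (hdiag : ∀ i, H i i ≠ 0) (w : Fin k → G) :
    (∃ u : Fin n → G, vecZPow u H = 1 ∧ u ∘ lastBlock hkn = w) ↔
      vecZPow w (lowerRight hkn H) = 1 := by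
  constructor
  · rintro ⟨u, hu, rfl⟩
    rw [vecZPow_lowerRight hkn hH, hu, Pi.one_comp]
  · intro hw
    set v : Fin n → G := extend (lastBlock hkn) w 1
    have hv : v ∘ lastBlock hkn = w := extend_comp (lastBlock_injective hkn) w 1
    have hv_sol : ∀ j : Fin n, n - k ≤ j → vecZPow v H j = 1 := by
      intro j hj
      obtain ⟨j, rfl⟩ := (mem_range_lastBlock hkn).mpr hj
      rw [← comp_apply (f := vecZPow v H), ← vecZPow_lowerRight hkn hH, hv, hw, Pi.one_apply]
    obtain ⟨u, hu, hu_sol⟩ :=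
      exists_vecZPow_eq_one_of_isLowerTriangular hroot hH hdiag (n - k) v hv_sol
    exact ⟨u, hu_sol, by rw [← hv]; exact funext fun j => hu _ (le_lastBlock hkn j)⟩

end LastBlock

section Orbit

variable {K : Type*} [Field K] {k N r : ℕ} (hkN : k ≤ N) (hNr : N ≤ r)

lemma vecZPow_firstRows {G : Type*} [CommGroup G] (A : Matrix (Fin r) (Fin N) ℤ)
    (t : Fin r → G) (ht : ∀ i : Fin r, N ≤ i → t i = 1) :
    vecZPow (t ∘ Fin.castLE hNr) (firstRows hNr A) = vecZPow t A :=
  vecZPow_comp_submatrix t A (Fin.castLE_injective hNr) id fun i hi j => by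
    rw [ht i (by simpa [Fin.range_castLE] using hi), one_zpow]

lemma xvec_of_lt (y : Fin k → Kˣ) {i : Fin r} (hi : i < N - k) : xvec hkN hNr y i = 0 :=
  dif_pos hi

lemma xvec_of_le (y : Fin k → Kˣ) {i : Fin r} (hi : N ≤ i) : xvec hkN hNr y i = 1 := by
  rw [xvec, dif_neg (by omega), dif_neg (by omega)]

lemma xvec_castLE_lastBlock (y : Fin k → Kˣ) (j : Fin k) :
    xvec hkN hNr y (Fin.castLE hNr (lastBlock hkN j)) = y j := by
  rw [xvec, dif_neg (by simp [lastBlock]), dif_pos (by simp [lastBlock]; omega)]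
  simp [lastBlock]

lemma mul_xvec_eq_xvec_iff (y y' : Fin k → Kˣ) (t : Fin r → Kˣ) :
    (∀ i, (t i : K) * xvec hkN hNr y i = xvec hkN hNr y' i) ↔
      (∀ i : Fin r, N ≤ i → t i = 1) ∧
        ∀ j, t (Fin.castLE hNr (lastBlock hkN j)) = y' j / y j := by
  constructor
  · intro h
    refine ⟨fun i hi => ?_, fun j => ?_⟩
    · have hti := h i
      rw [xvec_of_le hkN hNr y hi, xvec_of_le hkN hNr y' hi, mul_one] at hti
      exact Units.val_eq_one.mp hti
    · have hj := h (Fin.castLE hNr (lastBlock hkN j))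
      rw [xvec_castLE_lastBlock, xvec_castLE_lastBlock, ← Units.val_mul] at hj
      exact eq_div_iff_mul_eq'.mpr (Units.ext hj)
  · rintro ⟨h_one, h_block⟩ i
    by_cases hN : N ≤ i
    · rw [h_one i hN, xvec_of_le hkN hNr y hN, xvec_of_le hkN hNr y' hN, Units.val_one, one_mul]
    by_cases hNk : N - k ≤ i
    · obtain ⟨j, rfl⟩ : ∃ j, Fin.castLE hNr (lastBlock hkN j) = i :=
        ⟨⟨i - (N - k), by omega⟩, Fin.ext (by simp [lastBlock]; omega)⟩
      rw [h_block, xvec_castLE_lastBlock, xvec_castLE_lastBlock, ← Units.val_mul, div_mul_cancel]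
    · rw [xvec_of_lt hkN hNr y (not_le.mp hNk), xvec_of_lt hkN hNr y' (not_le.mp hNk), mul_zero]

lemma exists_mul_xvec_eq_xvec_iff (A : Matrix (Fin r) (Fin N) ℤ) (y y' : Fin k → Kˣ) :
    (∃ t : Fin r → Kˣ, (∀ j, vecZPow t A j = 1) ∧
        ∀ i, (t i : K) * xvec hkN hNr y i = xvec hkN hNr y' i) ↔
      ∃ u : Fin N → Kˣ, vecZPow u (firstRows hNr A) = 1 ∧ u ∘ lastBlock hkN = y' / y := by
  simp only [mul_xvec_eq_xvec_iff]
  constructor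
  · rintro ⟨t, ht_sol, ht_one, ht_block⟩
    exact ⟨t ∘ Fin.castLE hNr, by rw [vecZPow_firstRows hNr A t ht_one]; exact funext ht_sol,
      funext ht_block⟩
  · rintro ⟨u, hu_sol, hu_block⟩
    set t : Fin r → Kˣ := extend (Fin.castLE hNr) u 1
    have ht_one : ∀ i : Fin r, N ≤ i → t i = 1 := fun i hi =>
      extend_apply' _ _ _ (by rintro ⟨i', rfl⟩; exact absurd hi (not_le.mpr i'.isLt))
    have htu : t ∘ Fin.castLE hNr = u := extend_comp (Fin.castLE_injective hNr) u 1
    refine ⟨t, fun j => ?_, ht_one, fun j => ?_⟩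
    · rw [← vecZPow_firstRows hNr A t ht_one, htu, hu_sol, Pi.one_apply]
    · rw [← comp_apply (f := t), htu, ← comp_apply (f := u), hu_block, Pi.div_apply]

end Orbit

theorem stmt_4_general {K : Type*} [Field K] [IsAlgClosed K] {k N r : ℕ}
    (hkN : k ≤ N) (hNr : N ≤ r)
    (A : Matrix (Fin r) (Fin N) ℤ)
    (T : Matrix (Fin N) (Fin N) ℤ) (hT : IsUnit T.det)
    (hlow : ∀ i j : Fin N, (i : ℕ) < (j : ℕ) → (firstRows hNr A * T) i j = 0)
    (hdet : (firstRows hNr A).det ≠ 0)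
    (y y' : Fin k → Kˣ) :
    (∃ t : Fin r → Kˣ,
        (∀ j : Fin N, ∏ i : Fin r, t i ^ A i j = 1) ∧
        (∀ i : Fin r, (t i : K) * xvec hkN hNr y i = xvec hkN hNr y' i))
      ↔ ∀ j : Fin k,
          ∏ i : Fin k, y i ^ lowerRight hkN (firstRows hNr A * T) i j
            = ∏ i : Fin k, y' i ^ lowerRight hkN (firstRows hNr A * T) i j := by
  set H := firstRows hNr A * T
  have hH : H.IsLowerTriangular := fun i j hij => hlow i j hij
  have hdiag := hH.diag_ne_zero (by rw [Matrix.det_mul]; exact mul_ne_zero hdet hT.ne_zero)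
  calc _ ↔ ∃ u : Fin N → Kˣ,
          vecZPow u (firstRows hNr A) = 1 ∧ u ∘ lastBlock hkN = y' / y :=
        exists_mul_xvec_eq_xvec_iff hkN hNr A y y'
    _ ↔ ∃ u : Fin N → Kˣ, vecZPow u H = 1 ∧ u ∘ lastBlock hkN = y' / y := by
        simp only [H, vecZPow_mul_eq_one_iff _ _ hT]
    _ ↔ vecZPow (y' / y) (lowerRight hkN H) = 1 :=
        exists_vecZPow_eq_one_comp_lastBlock_iff hkN
          (fun _ => zpow_surjective_units_of_isAlgClosed K) hH hdiag _
    _ ↔ _ := by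
        rw [vecZPow_div_left, div_eq_one, funext_iff]
        exact forall_congr' fun j => eq_comm

/-- Lemma 3.8 '2rep': two `v`-normalized tuples `x(y)`, `x(y')`
lie in the same `G`-orbit iff `y^{L2} = y'^{L2}`. -/
theorem stmt_4 {K : Type*} [Field K] [IsAlgClosed K] {k N r : ℕ}
    (hk : 0 < k) (hkN : k ≤ N) (hNr : N ≤ r)
    (A : Matrix (Fin r) (Fin N) ℤ)
    (T : Matrix (Fin N) (Fin N) ℤ) (hT : IsUnit T.det)
    (hlow : ∀ i j : Fin N, (i : ℕ) < (j : ℕ) → (firstRows hNr A * T) i j = 0)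
    (hdet : (firstRows hNr A).det ≠ 0)
    (hchar : ∀ p : ℕ, 0 < p → CharP K p → ¬ ((p : ℤ) ∣ (firstRows hNr A).det))
    (y y' : Fin k → Kˣ) :
    (∃ t : Fin r → Kˣ,
        (∀ j : Fin N, ∏ i : Fin r, t i ^ A i j = 1) ∧
        (∀ i : Fin r, (t i : K) * xvec hkN hNr y i = xvec hkN hNr y' i))
      ↔ ∀ j : Fin k,
          ∏ i : Fin k, y i ^ lowerRight hkN (firstRows hNr A * T) i j
            = ∏ i : Fin k, y' i ^ lowerRight hkN (firstRows hNr A * T) i j :=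
  stmt_4_general hkN hNr A T hT hlow hdet y y'
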